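/- arXiv:1702.01588 — 5 statements merged into one kernel-verified Lean document; each statement's English description precedes it below -/
import Mathlib

section
/- Let S be a set with a transitive binary relation ≺ satisfying condition (*): for each a ∈ S there exists a sequence (a_n) with a_n ≺ a_{n+1} ≺ a for all n, and such that whenever a' ≺ a there exists n₀ with a' ≺ a_{n₀}. Then for every a ∈ S there exists a family (a_λ) indexed by λ ∈ (0,1) ∩ ℚ such that a_{λ'} ≺ a_λ whenever λ' < λ, and such that for every a' ∈ S with a' ≺ a there exists μ ∈ (0,1) ∩ ℚ with a' ≺ a_μ. -/
/-!
Condition (*) makes `≺` dense: if `x ≺ y` and `(y_n)` is the sequence attached to `y`, then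
`x ≺ y_n ≺ y_{n+1} ≺ y` for some `n`. In a dense transitive relation the "forth" half of
Cantor's back-and-forth argument places any countable linear order as a `≺`-chain inside any
interval `(x, y)`. Since `ℚ ∩ (0,1) ≃o ℕ ×ₗ (ℚ ∩ (0,1))` by Cantor's theorem, putting such a chain
into each gap `(a_n, a_{n+1})` of the sequence attached to `a` and concatenating gives the
family; it is cofinal below `a` because the `a_n` are.
-/

section

variable {S : Type*} {r : S → S → Prop}

theorem exists_between_of_exists_cofinal_seq [IsTrans S r] {x y : S}
    (hy : ∃ f : ℕ → S, (∀ n, r (f n) (f (n + 1))) ∧ (∀ n, r (f (n + 1)) y) ∧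
      ∀ a', r a' y → ∃ n, r a' (f n))
    (hxy : r x y) : ∃ z, r x z ∧ r z y := by
  obtain ⟨f, hf_succ, hf_lt, hf_cofinal⟩ := hy
  obtain ⟨n, hn⟩ := hf_cofinal x hxy
  exact ⟨f (n + 1), trans_of r hn (hf_succ n), hf_lt n⟩

theorem exists_seq_of_forall_extends [Nonempty S] (P : ℕ → (ℕ → S) → S → Prop)
    (hP : ∀ n g g' z, (∀ i < n, g i = g' i) → P n g z → P n g' z)
    (h : ∀ n g, (∀ i < n, P i g (g i)) → ∃ z, P n g z) :
    ∃ g : ℕ → S, ∀ n, P n g (g n) := by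
  classical
  choose! next hnext using h
  let trunc (g : ℕ → S) (n : ℕ) : ℕ → S := fun i => if i < n then g i else Classical.arbitrary S
  let g : ℕ → S := Nat.strongRec fun n hist =>
    next n fun i => if hi : i < n then hist i hi else Classical.arbitrary S
  have hg : ∀ n, g n = next n (trunc g n) := fun n => by
    rw [show g n = _ from Nat.strongRec_eq _ n]
    simp only [trunc, dite_eq_ite]
    rfl
  refine ⟨g, fun n => Nat.strong_induction_on n fun n ih => ?_⟩
  have htrunc : ∀ i < n, trunc g n i = g i := fun i hi => if_pos hi
  have hnext_n := hnext n (trunc g n) fun i hi => by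
    rw [htrunc i hi]
    exact hP i g _ _ (fun j hj => (htrunc j (hj.trans hi)).symm) (ih i hi)
  rw [hg n]
  exact hP n _ g _ htrunc hnext_n

theorem exists_rel_between_finset [IsTrans S r] [Nonempty S]
    (hdense : ∀ ⦃x y⦄, r x y → ∃ z, r x z ∧ r z y)
    (hnomin : ∀ x, ∃ y, r y x) (hnomax : ∀ x, ∃ y, r x y)
    {α : Type*} [LinearOrder α] (φ : α → S) (s : Finset α)
    (hφ : ∀ a ∈ s, ∀ b ∈ s, a < b → r (φ a) (φ b)) (p : α) :
    ∃ z, ∀ a ∈ s, (a < p → r (φ a) z) ∧ (p < a → r z (φ a)) := by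
  set A := s.filter (· < p)
  set B := s.filter (p < ·)
  have below_max {w} (hA : A.Nonempty) (hw : r (φ (A.max' hA)) w) : ∀ a ∈ A, r (φ a) w := by
    intro a ha
    rcases (A.le_max' a ha).lt_or_eq with h | h
    · have hmax := (Finset.mem_filter.1 (A.max'_mem hA)).1
      exact trans_of r (hφ a (Finset.mem_filter.1 ha).1 _ hmax h) hw
    · rwa [h]
  have above_min {w} (hB : B.Nonempty) (hw : r w (φ (B.min' hB))) : ∀ b ∈ B, r w (φ b) := by
    intro b hb
    rcases (B.min'_le b hb).lt_or_eq with h | h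
    · have hmin := (Finset.mem_filter.1 (B.min'_mem hB)).1
      exact trans_of r hw (hφ _ hmin b (Finset.mem_filter.1 hb).1 h)
    · rwa [← h]
  suffices ∃ z, (∀ a ∈ A, r (φ a) z) ∧ ∀ b ∈ B, r z (φ b) by
    obtain ⟨z, hA, hB⟩ := this
    exact ⟨z, fun a ha => ⟨fun h => hA a (Finset.mem_filter.2 ⟨ha, h⟩),
      fun h => hB a (Finset.mem_filter.2 ⟨ha, h⟩)⟩⟩
  rcases A.eq_empty_or_nonempty with hA | hA <;> rcases B.eq_empty_or_nonempty with hB | hB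
  · exact ⟨Classical.arbitrary S, by simp [hA], by simp [hB]⟩
  · obtain ⟨z, hz⟩ := hnomin (φ (B.min' hB))
    exact ⟨z, by simp [hA], above_min hB hz⟩
  · obtain ⟨z, hz⟩ := hnomax (φ (A.max' hA))
    exact ⟨z, below_max hA hz, by simp [hB]⟩
  · have hAB : A.max' hA < B.min' hB :=
      ((Finset.mem_filter.1 (A.max'_mem hA)).2).trans (Finset.mem_filter.1 (B.min'_mem hB)).2
    obtain ⟨z, hAz, hzB⟩ := hdense (hφ _ (Finset.mem_filter.1 (A.max'_mem hA)).1 _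
      (Finset.mem_filter.1 (B.min'_mem hB)).1 hAB)
    exact ⟨z, below_max hA hAz, above_min hB hzB⟩

theorem exists_relHom_lt_of_dense [IsTrans S r] [Nonempty S]
    (hdense : ∀ ⦃x y⦄, r x y → ∃ z, r x z ∧ r z y)
    (hnomin : ∀ x, ∃ y, r y x) (hnomax : ∀ x, ∃ y, r x y)
    (α : Type*) [LinearOrder α] [Countable α] :
    Nonempty (((· < ·) : α → α → Prop) →r r) := by
  obtain ⟨c, hc⟩ := Countable.exists_injective_nat α
  -- Stage `n` places the point coded by `n`, if there is one, compatibly with the earlier ones.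
  let P (n : ℕ) (G : ℕ → S) (z : S) : Prop :=
    ∀ a b, c a < n → c b = n → (a < b → r (G (c a)) z) ∧ (b < a → r z (G (c a)))
  have hmono (G : ℕ → S) (a b : α) (hab : a < b) (ha : P (c a) G (G (c a)))
      (hb : P (c b) G (G (c b))) : r (G (c a)) (G (c b)) := by
    rcases lt_trichotomy (c a) (c b) with h | h | h
    · exact (hb a b h rfl).1 hab
    · exact absurd (hc h) hab.ne
    · exact (ha b a h rfl).2 hab
  obtain ⟨G, hG⟩ := exists_seq_of_forall_extends P
    (fun n G G' z hGG' hz a b ha hb => hGG' _ ha ▸ hz a b ha hb)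
    (fun n G hG => by
      by_cases hn : ∃ p, c p = n
      · obtain ⟨p, rfl⟩ := hn
        obtain ⟨z, hz⟩ := exists_rel_between_finset hdense hnomin hnomax (G ∘ c)
          ((Finset.range (c p)).preimage c hc.injOn)
          (fun a ha b hb hab => hmono G a b hab (hG _ (by simpa using ha))
            (hG _ (by simpa using hb))) p
        exact ⟨z, fun a b ha hb => hc hb ▸ hz a (by simpa using ha)⟩
      · exact ⟨Classical.arbitrary S, fun a b _ hb => absurd ⟨b, hb⟩ hn⟩)
  exact ⟨⟨G ∘ c, fun {a b} hab => hmono G a b hab (hG _) (hG _)⟩⟩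

theorem exists_relHom_lt_between [IsTrans S r] (hdense : ∀ ⦃x y⦄, r x y → ∃ z, r x z ∧ r z y)
    {x y : S} (hxy : r x y) (α : Type*) [LinearOrder α] [Countable α] :
    ∃ g : ((· < ·) : α → α → Prop) →r r, ∀ a, r x (g a) ∧ r (g a) y := by
  let I (z : S) : Prop := r x z ∧ r z y
  obtain ⟨z, hxz, hzy⟩ := hdense hxy
  have : Nonempty (Subtype I) := ⟨⟨z, hxz, hzy⟩⟩
  obtain ⟨g⟩ := exists_relHom_lt_of_dense (r := Subrel r I)
    (fun u v huv => by
      obtain ⟨w, huw, hwv⟩ := hdense huv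
      exact ⟨⟨w, trans_of r u.2.1 huw, trans_of r hwv v.2.2⟩, huw, hwv⟩)
    (fun u => by
      obtain ⟨w, hxw, hwu⟩ := hdense u.2.1
      exact ⟨⟨w, hxw, trans_of r hwu u.2.2⟩, hwu⟩)
    (fun u => by
      obtain ⟨w, huw, hwy⟩ := hdense u.2.2
      exact ⟨⟨w, trans_of r u.2.1 huw, hwy⟩, huw⟩) α
  exact ⟨⟨fun a => (g a).1, g.map_rel⟩, fun a => (g a).2⟩

theorem exists_relHom_lt_cofinal [IsTrans S r] (hdense : ∀ ⦃x y⦄, r x y → ∃ z, r x z ∧ r z y)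
    (α : Type*) [LinearOrder α] [Countable α] [DenselyOrdered α] [NoMinOrder α] [NoMaxOrder α]
    [Nonempty α] {f : ℕ → S} (hf : ∀ n, r (f n) (f (n + 1))) :
    ∃ g : ((· < ·) : α → α → Prop) →r r, ∀ n, ∃ a, r (f n) (g a) := by
  choose h hh using fun n => exists_relHom_lt_between hdense (hf n) α
  have : Countable (ℕ ×ₗ α) := inferInstanceAs (Countable (ℕ × α))
  obtain ⟨e⟩ := Order.iso_of_countable_dense α (ℕ ×ₗ α)
  let G (p : ℕ ×ₗ α) : S := h (ofLex p).1 (ofLex p).2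
  have hG : ∀ p q, p < q → r (G p) (G q) := by
    rintro ⟨n, a⟩ ⟨m, b⟩ hpq
    rcases Prod.Lex.lt_iff.1 hpq with hnm | ⟨rfl, hab⟩
    · have hf_le : r (f (n + 1)) (G (m, b)) := by
        rcases (Nat.succ_le_of_lt hnm).eq_or_lt with rfl | hlt
        · exact (hh _ b).1
        · exact trans_of r (Nat.rel_of_forall_rel_succ_of_lt r hf hlt) (hh m b).1
      exact trans_of r (hh n a).2 hf_le
    · exact (h n).map_rel hab
  refine ⟨⟨G ∘ e, fun hab => hG _ _ (e.strictMono hab)⟩, fun n => ?_⟩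
  let a := Classical.arbitrary α
  exact ⟨e.symm (toLex (n, a)), by simpa [G] using (hh n a).1⟩

end

/-- If a transitive relation `r` on `S` satisfies condition (*), then every element `a`
admits a chain indexed by the rationals in `(0,1)`, strictly increasing with respect to
`r`, which is cofinal among the predecessors of `a`. -/
theorem stmt1 {S : Type*} (r : S → S → Prop)
    (htrans : ∀ ⦃a b c : S⦄, r a b → r b c → r a c)
    (hstar : ∀ a : S, ∃ f : ℕ → S, (∀ n, r (f n) (f (n + 1))) ∧ (∀ n, r (f (n + 1)) a) ∧
      (∀ a' : S, r a' a → ∃ n, r a' (f n)))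
    (a : S) :
    ∃ g : {q : ℚ // 0 < q ∧ q < 1} → S,
      (∀ l m : {q : ℚ // 0 < q ∧ q < 1}, l.1 < m.1 → r (g l) (g m)) ∧
      (∀ a' : S, r a' a → ∃ μ : {q : ℚ // 0 < q ∧ q < 1}, r a' (g μ)) := by
  have : IsTrans S r := ⟨htrans⟩
  have : Nonempty (Set.Ioo (0 : ℚ) 1) := Set.nonempty_Ioo_subtype one_pos
  obtain ⟨f, hf_succ, -, hf_cofinal⟩ := hstar a
  obtain ⟨g, hg⟩ := exists_relHom_lt_cofinal
    (fun x y => exists_between_of_exists_cofinal_seq (hstar y)) (Set.Ioo (0 : ℚ) 1) hf_succ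
  refine ⟨g, fun l m hlm => g.map_rel hlm, fun a' ha' => ?_⟩
  obtain ⟨n, hn⟩ := hf_cofinal a' ha'
  obtain ⟨μ, hμ⟩ := hg n
  exact ⟨μ, trans_of r hn hμ⟩
end

section
/- Let S be a Cu-semigroup and let a ∈ S. Then there exists a family (a_λ) indexed by λ ∈ (0,1] with a₁ = a, such that a_{λ'} ≪ a_λ whenever λ' < λ in (0,1], and such that a_λ is the supremum of {a_{λ'} : λ' < λ} for every λ ∈ (0,1]. -/
/-- The sequential way-below (compact containment) relation in a preordered set. -/
def CuWayBelow {S : Type*} [Preorder S] (x y : S) : Prop :=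
  ∀ z : ℕ → S, Monotone z → ∀ s : S, IsLUB (Set.range z) s → y ≤ s → ∃ k, x ≤ z k

/-- An abstract Cuntz semigroup: a positively ordered monoid satisfying (O1)-(O4). -/
class IsCuSgp (S : Type*) [AddCommMonoid S] [PartialOrder S] : Prop where
  zero_le : ∀ a : S, 0 ≤ a
  add_mono : ∀ ⦃a b c d : S⦄, a ≤ b → c ≤ d → a + c ≤ b + d
  O1 : ∀ z : ℕ → S, Monotone z → ∃ s, IsLUB (Set.range z) s
  O2 : ∀ a : S, ∃ z : ℕ → S, (∀ n, CuWayBelow (z n) (z (n + 1))) ∧ IsLUB (Set.range z) a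
  O3 : ∀ ⦃a' a b' b : S⦄, CuWayBelow a' a → CuWayBelow b' b → CuWayBelow (a' + b') (a + b)
  O4 : ∀ z w : ℕ → S, Monotone z → Monotone w → ∀ s t : S, IsLUB (Set.range z) s →
    IsLUB (Set.range w) t → IsLUB (Set.range fun n => z n + w n) (s + t)

/-!
Choose by (O2) a sequence `z 0 ≪ z 1 ≪ ⋯` with supremum `a`, and put `z j = 0` for `j < 0`.
Inserting, level after level, an element `c` with `x ≪ c ≪ y` between every two neighbours
`x ≪ y` (possible by (O2)) gives a family indexed by the dyadic rationals that is increasing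
for `≪`. For real `t` let `G t` be the supremum of its values at the dyadics `< t`; it exists by
(O1), being the supremum of the values at the largest dyadic of level `n` below `t`. Any two
reals are separated by two consecutive dyadics, so `s < t` gives `G s ≪ G t`; left continuity
and `sup G = a` are formal. Finally the logistic sigmoid carries `ℝ` onto `(0, 1)`, and `a` is
put at `1`.
-/

open Set

section WayBelow

variable {S : Type*}

lemma CuWayBelow.le [Preorder S] {x y : S} (h : CuWayBelow x y) : x ≤ y :=
  (h (fun _ => y) monotone_const y (by rw [range_const]; exact isLUB_singleton) le_rfl).elim
    fun _ hk => hk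

lemma CuWayBelow.mono [Preorder S] {x x' y y' : S} (hx : x ≤ x') (hy : y' ≤ y)
    (h : CuWayBelow x' y') : CuWayBelow x y := fun w hw s hs hys =>
  (h w hw s hs (hy.trans hys)).imp fun _ hk => hx.trans hk

variable [AddCommMonoid S] [PartialOrder S] [IsCuSgp S]

lemma zero_cuWayBelow (y : S) : CuWayBelow 0 y := fun _ _ _ _ _ => ⟨0, IsCuSgp.zero_le _⟩

lemma CuWayBelow.exists_between {x y : S} (h : CuWayBelow x y) :
    ∃ c, CuWayBelow x c ∧ CuWayBelow c y := by
  obtain ⟨w, hw, hlub⟩ := IsCuSgp.O2 y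
  obtain ⟨k, hk⟩ := h w (monotone_nat_of_le_succ fun n => (hw n).le) y hlub le_rfl
  exact ⟨w (k + 1), (hw k).mono hk le_rfl, (hw (k + 1)).mono le_rfl (hlub.1 (mem_range_self _))⟩

lemma exists_int_cuWayBelow_chain (a : S) :
    ∃ z : ℤ → S, (∀ j, CuWayBelow (z j) (z (j + 1))) ∧ IsLUB (range z) a := by
  obtain ⟨w, hw, hlub⟩ := IsCuSgp.O2 a
  refine ⟨fun j => if 0 ≤ j then w j.toNat else 0, fun j => ?_, ?_⟩
  · rcases lt_or_ge j 0 with hj | hj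
    · simpa [hj.not_ge] using zero_cuWayBelow _
    · simpa [hj, show 0 ≤ j + 1 by omega, show (j + 1).toNat = j.toNat + 1 by omega] using
        hw j.toNat
  · refine ⟨?_, fun u hu => hlub.2 ?_⟩
    · rintro _ ⟨j, rfl⟩
      dsimp only
      split_ifs
      exacts [hlub.1 (mem_range_self _), IsCuSgp.zero_le a]
    · rintro _ ⟨k, rfl⟩
      simpa using hu ⟨k, rfl⟩

end WayBelow

section DyadicRefine

variable {α : Type*} (mid : α → α → α) (z : ℤ → α)

/-- Level `n`, index `j` sits at the dyadic point `j / 2 ^ n`; the new odd points of level `n + 1`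
are filled with `mid` of their two neighbours. -/
def dyadicRefine : ℕ → ℤ → α
  | 0 => z
  | n + 1 => fun j =>
      if 2 ∣ j then dyadicRefine n (j / 2)
      else mid (dyadicRefine n (j / 2)) (dyadicRefine n (j / 2 + 1))

lemma dyadicRefine_two_mul (n : ℕ) (j : ℤ) :
    dyadicRefine mid z (n + 1) (2 * j) = dyadicRefine mid z n j := by
  simp [dyadicRefine]

lemma dyadicRefine_two_mul_add_one (n : ℕ) (j : ℤ) :
    dyadicRefine mid z (n + 1) (2 * j + 1) =
      mid (dyadicRefine mid z n j) (dyadicRefine mid z n (j + 1)) := by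
  simp [dyadicRefine, show ¬ (2 : ℤ) ∣ 2 * j + 1 by omega, show (2 * j + 1) / 2 = j by omega]

lemma dyadicRefine_mul_two_pow (n k : ℕ) (j : ℤ) :
    dyadicRefine mid z (n + k) (j * 2 ^ k) = dyadicRefine mid z n j := by
  induction k with
  | zero => simp
  | succ k ih =>
    rw [← add_assoc, pow_succ, ← mul_assoc, mul_comm _ (2 : ℤ), dyadicRefine_two_mul, ih]

lemma dyadicRefine_rel_succ {r : α → α → Prop}
    (hmid : ∀ x y, r x y → r x (mid x y) ∧ r (mid x y) y) (hz : ∀ j, r (z j) (z (j + 1))) :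
    ∀ n j, r (dyadicRefine mid z n j) (dyadicRefine mid z n (j + 1)) := by
  intro n
  induction n with
  | zero => exact hz
  | succ n ih =>
    intro j
    obtain ⟨m, rfl | rfl⟩ := Int.even_or_odd' j
    · rw [dyadicRefine_two_mul_add_one, dyadicRefine_two_mul]
      exact (hmid _ _ (ih m)).1
    · rw [dyadicRefine_two_mul_add_one, show 2 * m + 1 + 1 = 2 * (m + 1) by ring,
        dyadicRefine_two_mul]
      exact (hmid _ _ (ih m)).2

end DyadicRefine

lemma div_two_pow_le_div_two_pow_iff {n m : ℕ} {j j' : ℤ} :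
    (j : ℝ) / 2 ^ n ≤ j' / 2 ^ m ↔ j * 2 ^ m ≤ j' * 2 ^ n := by
  rw [div_le_div_iff₀ (by positivity) (by positivity)]
  norm_cast

lemma div_two_pow_lt_div_two_pow_iff {n m : ℕ} {j j' : ℤ} :
    (j : ℝ) / 2 ^ n < j' / 2 ^ m ↔ j * 2 ^ m < j' * 2 ^ n := by
  rw [div_lt_div_iff₀ (by positivity) (by positivity)]
  norm_cast

lemma exists_dyadic_btwn {s t : ℝ} (h : s < t) :
    ∃ (n : ℕ) (j : ℤ), s ≤ (j : ℝ) / 2 ^ n ∧ ((j : ℝ) + 1) / 2 ^ n < t := by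
  obtain ⟨n, hn⟩ := exists_pow_lt_of_lt_one (half_pos (sub_pos.2 h)) (by norm_num : (1 / 2 : ℝ) < 1)
  have h2n : (0 : ℝ) < 2 ^ n := by positivity
  rw [one_div_pow, div_lt_iff₀ h2n] at hn
  have hceil := Int.ceil_lt_add_one (2 ^ n * s)
  refine ⟨n, ⌈2 ^ n * s⌉, ?_, ?_⟩
  · rw [le_div_iff₀ h2n, mul_comm]
    exact Int.le_ceil _
  · rw [div_lt_iff₀ h2n]
    linarith

section DyadicChain

variable {S : Type*} [Preorder S] {mid : S → S → S} {z : ℤ → S}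

lemma dyadicRefine_monotone
    (hmid : ∀ x y, CuWayBelow x y → CuWayBelow x (mid x y) ∧ CuWayBelow (mid x y) y)
    (hz : ∀ j, CuWayBelow (z j) (z (j + 1))) (n : ℕ) : Monotone (dyadicRefine mid z n) :=
  monotone_int_of_le_succ fun j => (dyadicRefine_rel_succ mid z hmid hz n j).le

lemma dyadicRefine_le_of_le
    (hmid : ∀ x y, CuWayBelow x y → CuWayBelow x (mid x y) ∧ CuWayBelow (mid x y) y)
    (hz : ∀ j, CuWayBelow (z j) (z (j + 1))) {n m : ℕ} {j j' : ℤ}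
    (h : (j : ℝ) / 2 ^ n ≤ j' / 2 ^ m) : dyadicRefine mid z n j ≤ dyadicRefine mid z m j' := by
  rw [← dyadicRefine_mul_two_pow mid z n m, ← dyadicRefine_mul_two_pow mid z m n, add_comm m]
  exact dyadicRefine_monotone hmid hz _ (div_two_pow_le_div_two_pow_iff.1 h)

lemma dyadicRefine_cuWayBelow_of_lt
    (hmid : ∀ x y, CuWayBelow x y → CuWayBelow x (mid x y) ∧ CuWayBelow (mid x y) y)
    (hz : ∀ j, CuWayBelow (z j) (z (j + 1))) {n m : ℕ} {j j' : ℤ}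
    (h : (j : ℝ) / 2 ^ n < j' / 2 ^ m) :
    CuWayBelow (dyadicRefine mid z n j) (dyadicRefine mid z m j') := by
  rw [← dyadicRefine_mul_two_pow mid z n m, ← dyadicRefine_mul_two_pow mid z m n, add_comm m]
  have hlt := div_two_pow_lt_div_two_pow_iff.1 h
  have hstep := dyadicRefine_rel_succ mid z hmid hz (n + m) (j' * 2 ^ n - 1)
  rw [sub_add_cancel] at hstep
  exact hstep.mono (dyadicRefine_monotone hmid hz _ (by omega)) le_rfl

lemma isLUB_range_dyadicRefine
    (hmid : ∀ x y, CuWayBelow x y → CuWayBelow x (mid x y) ∧ CuWayBelow (mid x y) y)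
    (hz : ∀ j, CuWayBelow (z j) (z (j + 1))) {a : S} (ha : IsLUB (range z) a) :
    IsLUB (range fun p : ℕ × ℤ => dyadicRefine mid z p.1 p.2) a := by
  refine (isLUB_congr (Subset.antisymm ?_ ?_)).1 ha
  · rintro u hu _ ⟨⟨n, j⟩, rfl⟩
    refine (dyadicRefine_le_of_le hmid hz (m := 0) (j' := ⌈(j : ℝ) / 2 ^ n⌉) ?_).trans
      (hu (mem_range_self _))
    simpa using Int.le_ceil _
  · rintro u hu _ ⟨j, rfl⟩
    exact hu ⟨(0, j), rfl⟩

end DyadicChain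

section RealChain

variable {S : Type*}

def dyadicBelow (D : ℕ → ℤ → S) (t : ℝ) : Set S :=
  {x | ∃ (n : ℕ) (j : ℤ), (j : ℝ) / 2 ^ n < t ∧ D n j = x}

lemma exists_isLUB_dyadicBelow [AddCommMonoid S] [PartialOrder S] [IsCuSgp S]
    {D : ℕ → ℤ → S} (hle : ∀ {n m : ℕ} {j j' : ℤ}, (j : ℝ) / 2 ^ n ≤ j' / 2 ^ m → D n j ≤ D m j')
    (t : ℝ) : ∃ x, IsLUB (dyadicBelow D t) x := by
  set c : ℕ → ℤ := fun k => ⌈2 ^ k * t⌉ - 1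
  have hc : ∀ k (j : ℤ), (j : ℝ) / 2 ^ k < t ↔ j ≤ c k := fun k j => by
    rw [div_lt_iff₀ (by positivity), mul_comm, ← Int.lt_ceil]
    simp only [c]
    omega
  have hmono : Monotone fun k => D k (c k) := monotone_nat_of_le_succ fun k => hle <| by
    have h2 : 2 * c k ≤ c (k + 1) := (hc (k + 1) _).1 <| by
      rw [pow_succ', Int.cast_mul, Int.cast_two, mul_div_mul_left _ _ two_ne_zero]
      exact (hc k _).2 le_rfl
    rw [div_two_pow_le_div_two_pow_iff, pow_succ]
    linarith [mul_le_mul_of_nonneg_right h2 (pow_nonneg zero_le_two k : (0 : ℤ) ≤ 2 ^ k)]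
  obtain ⟨x, hx⟩ := IsCuSgp.O1 _ hmono
  refine ⟨x, ?_, fun u hu => hx.2 ?_⟩
  · rintro _ ⟨n, j, hj, rfl⟩
    obtain ⟨k, j', hj', hk⟩ := exists_dyadic_btwn hj
    have hj'c : j' ≤ c k := by
      have := (hc k (j' + 1)).1 (by exact_mod_cast hk)
      omega
    calc D n j ≤ D k (c k) :=
          hle (hj'.trans (div_le_div_of_nonneg_right (Int.cast_le.2 hj'c) (by positivity)))
      _ ≤ x := hx.1 (mem_range_self k)
  · rintro _ ⟨k, rfl⟩
    exact hu ⟨k, c k, (hc k _).2 le_rfl, rfl⟩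

variable [Preorder S] {D : ℕ → ℤ → S} {G : ℝ → S}

lemma cuWayBelow_of_isLUB_dyadicBelow
    (hle : ∀ {n m : ℕ} {j j' : ℤ}, (j : ℝ) / 2 ^ n ≤ j' / 2 ^ m → D n j ≤ D m j')
    (hwb : ∀ {n m : ℕ} {j j' : ℤ}, (j : ℝ) / 2 ^ n < j' / 2 ^ m → CuWayBelow (D n j) (D m j'))
    (hG : ∀ t, IsLUB (dyadicBelow D t) (G t)) {s t : ℝ} (h : s < t) : CuWayBelow (G s) (G t) := by
  obtain ⟨n, j, hs, ht⟩ := exists_dyadic_btwn h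
  have hGs : G s ≤ D n j := (hG s).2 fun _ ⟨_, _, hi, hx⟩ => hx ▸ hle (hi.le.trans hs)
  have hGt : D n (j + 1) ≤ G t := (hG t).1 ⟨n, j + 1, by exact_mod_cast ht, rfl⟩
  exact (hwb (div_lt_div_of_pos_right (by simp) (by positivity))).mono hGs hGt

lemma isLUB_image_Iio_of_isLUB_dyadicBelow (hG : ∀ t, IsLUB (dyadicBelow D t) (G t)) (t : ℝ) :
    IsLUB (G '' Iio t) (G t) := by
  refine ⟨?_, fun u hu => (hG t).2 ?_⟩
  · rintro _ ⟨s, hs, rfl⟩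
    exact (hG s).mono (hG t) fun _ ⟨n, j, hj, hx⟩ => ⟨n, j, hj.trans hs, hx⟩
  · rintro _ ⟨n, j, hj, rfl⟩
    obtain ⟨s, hjs, hst⟩ := exists_between hj
    exact ((hG s).1 ⟨n, j, hjs, rfl⟩).trans (hu ⟨s, hst, rfl⟩)

lemma isLUB_range_of_isLUB_dyadicBelow (hG : ∀ t, IsLUB (dyadicBelow D t) (G t)) {a : S}
    (ha : IsLUB (range fun p : ℕ × ℤ => D p.1 p.2) a) : IsLUB (range G) a := by
  refine (isLUB_congr (Subset.antisymm ?_ ?_)).1 ha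
  · rintro u hu _ ⟨t, rfl⟩
    exact (hG t).2 fun _ ⟨n, j, _, hx⟩ => hu ⟨(n, j), hx⟩
  · rintro u hu _ ⟨⟨n, j⟩, rfl⟩
    exact ((hG _).1 ⟨n, j, lt_add_one _, rfl⟩).trans (hu (mem_range_self _))

end RealChain

lemma exists_real_cuWayBelow_chain {S : Type*} [AddCommMonoid S] [PartialOrder S] [IsCuSgp S]
    (a : S) : ∃ G : ℝ → S, (∀ s t, s < t → CuWayBelow (G s) (G t)) ∧
      (∀ t, IsLUB (G '' Iio t) (G t)) ∧ IsLUB (range G) a := by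
  obtain ⟨z, hz, hza⟩ := exists_int_cuWayBelow_chain a
  have hinterp : ∀ x y : S, ∃ c, CuWayBelow x y → CuWayBelow x c ∧ CuWayBelow c y := fun x y =>
    (em (CuWayBelow x y)).elim (fun h => h.exists_between.imp fun _ hc _ => hc)
      fun h => ⟨x, fun h' => (h h').elim⟩
  choose mid hmid using hinterp
  choose G hG using exists_isLUB_dyadicBelow (dyadicRefine_le_of_le hmid hz)
  exact ⟨G, fun _ _ => cuWayBelow_of_isLUB_dyadicBelow (dyadicRefine_le_of_le hmid hz)
    (dyadicRefine_cuWayBelow_of_lt hmid hz) hG, isLUB_image_Iio_of_isLUB_dyadicBelow hG,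
    isLUB_range_of_isLUB_dyadicBelow hG (isLUB_range_dyadicRefine hmid hz hza)⟩

open Real in
lemma exists_Ioc_chain_of_real_chain {S : Type*} [Preorder S] {a : S} (G : ℝ → S)
    (hwb : ∀ s t, s < t → CuWayBelow (G s) (G t)) (hlub : ∀ t, IsLUB (G '' Iio t) (G t))
    (ha : IsLUB (range G) a) :
    ∃ g : {x : ℝ // 0 < x ∧ x ≤ 1} → S,
      g ⟨1, by norm_num⟩ = a ∧
      (∀ l m : {x : ℝ // 0 < x ∧ x ≤ 1}, l.1 < m.1 → CuWayBelow (g l) (g m)) ∧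
      (∀ m : {x : ℝ // 0 < x ∧ x ≤ 1}, IsLUB (g '' {l | l.1 < m.1}) (g m)) := by
  classical
  set ψ := Function.invFun sigmoid
  have hσψ : ∀ {x}, 0 < x → x < 1 → sigmoid (ψ x) = x := fun h0 h1 =>
    Function.invFun_eq (by rw [← mem_range, range_sigmoid]; exact ⟨h0, h1⟩)
  have hψσ : ∀ t, ψ (sigmoid t) = t := Function.leftInverse_invFun sigmoid_injective
  set g : {x : ℝ // 0 < x ∧ x ≤ 1} → S := fun l => if l.1 < 1 then G (ψ l.1) else a
  have hg : ∀ l : {x : ℝ // 0 < x ∧ x ≤ 1}, l.1 < 1 → g l = G (ψ l.1) := fun l hl => if_pos hl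
  have himage : ∀ m : {x : ℝ // 0 < x ∧ x ≤ 1},
      g '' {l | l.1 < m.1} = G '' {t | sigmoid t < m.1} := fun m => by
    ext x
    constructor
    · rintro ⟨l, hl, rfl⟩
      have hl1 : l.1 < 1 := hl.trans_le m.2.2
      exact ⟨ψ l.1, by rwa [mem_ofPred, hσψ l.2.1 hl1], (hg l hl1).symm⟩
    · rintro ⟨t, ht, rfl⟩
      exact ⟨⟨sigmoid t, sigmoid_pos t, (sigmoid_lt_one t).le⟩, ht, by
        rw [hg _ (sigmoid_lt_one t), hψσ]⟩
  refine ⟨g, if_neg (lt_irrefl 1), fun l m hlm => ?_, fun m => ?_⟩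
  · have hl1 : l.1 < 1 := hlm.trans_le m.2.2
    rw [hg l hl1]
    rcases m.2.2.lt_or_eq with hm1 | hm1
    · rw [hg m hm1]
      refine hwb _ _ (sigmoid_lt_iff.1 ?_)
      rwa [hσψ l.2.1 hl1, hσψ m.2.1 hm1]
    · rw [show g m = a from if_neg hm1.not_lt]
      exact (hwb _ _ (lt_add_one _)).mono le_rfl (ha.1 (mem_range_self _))
  · rw [himage]
    rcases m.2.2.lt_or_eq with hm1 | hm1
    · have hIio : {t | sigmoid t < m.1} = Iio (ψ m.1) := by
        ext t
        rw [mem_ofPred, mem_Iio, ← sigmoid_lt_iff (b := ψ m.1), hσψ m.2.1 hm1]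
      rw [hIio, hg m hm1]
      exact hlub _
    · have huniv : {t | sigmoid t < m.1} = univ := eq_univ_of_forall fun t => by
        rw [mem_ofPred, hm1]; exact sigmoid_lt_one t
      rw [huniv, image_univ, show g m = a from if_neg hm1.not_lt]
      exact ha

/-- In a Cu-semigroup, every element `a` is the endpoint of a `(0,1]`-indexed chain
which is way-below increasing and continuous (each member is the supremum of the
earlier ones). -/
theorem stmt3 {S : Type*} [AddCommMonoid S] [PartialOrder S] [IsCuSgp S] (a : S) :
    ∃ g : {x : ℝ // 0 < x ∧ x ≤ 1} → S,
      g ⟨1, by norm_num⟩ = a ∧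
      (∀ l m : {x : ℝ // 0 < x ∧ x ≤ 1}, l.1 < m.1 → CuWayBelow (g l) (g m)) ∧
      (∀ m : {x : ℝ // 0 < x ∧ x ≤ 1}, IsLUB (g '' {l | l.1 < m.1}) (g m)) := by
  obtain ⟨G, hwb, hlub, ha⟩ := exists_real_cuWayBelow_chain a
  exact exists_Ioc_chain_of_real_chain G hwb hlub ha
end

section
/- Let S be a P-semigroup with paths indexed by (0,1) ∩ ℚ. Let f be a path and ε ∈ (0,1) ∩ ℚ, and define the ε-cut-down f_ε by f_ε(λ) = f(λ − ε) if λ > ε and f_ε(λ) = 0 otherwise. Then f_ε is again a path, and in the quotient monoid τ(S) = P(S)/∼ the class [f_ε] is way-below the class [f_{ε'}] whenever ε' < ε; moreover [f] is the supremum of the increasing family ([f_ε])_{ε}. -/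
/-- The rationals in the open interval `(0,1)`, used as index set for paths. -/
abbrev Iq : Type := {q : ℚ // 0 < q ∧ q < 1}

lemma Iq.exists_gt (l : Iq) : ∃ m : Iq, l.1 < m.1 := by
  obtain ⟨h0, h1⟩ := l.2
  exact ⟨⟨(l.1 + 1) / 2, by constructor <;> linarith⟩, by show l.1 < (l.1 + 1) / 2; linarith⟩

/-- A `P`-semigroup: a commutative monoid with an additive transitive relation. -/
structure PSgp (M : Type*) [AddCommMonoid M] where
  prec : M → M → Prop
  trans : ∀ ⦃a b c : M⦄, prec a b → prec b c → prec a c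
  zero_prec : ∀ a : M, prec 0 a
  add_prec : ∀ ⦃a b c d : M⦄, prec a b → prec c d → prec (a + c) (b + d)

namespace PSgp

variable {M : Type*} [AddCommMonoid M]

/-- A path in a `P`-semigroup, indexed by the rationals in `(0,1)`. -/
def IsPath (P : PSgp M) (f : Iq → M) : Prop :=
  ∀ ⦃l m : Iq⦄, l.1 < m.1 → P.prec (f l) (f m)

/-- The type of paths in a `P`-semigroup. -/
def Path (P : PSgp M) : Type _ := {f : Iq → M // P.IsPath f}

variable {P : PSgp M}

instance : Add P.Path :=
  ⟨fun f g => ⟨fun l => f.1 l + g.1 l, fun _ _ h => P.add_prec (f.2 h) (g.2 h)⟩⟩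

instance : Zero P.Path := ⟨⟨fun _ => 0, fun _ _ _ => P.zero_prec 0⟩⟩

lemma path_add_apply (f g : P.Path) (l : Iq) : (f + g).1 l = f.1 l + g.1 l := rfl

/-- The pre-order relation between paths. -/
def pLe (f g : P.Path) : Prop := ∀ l : Iq, ∃ m : Iq, P.prec (f.1 l) (g.1 m)

lemma pLe_refl (f : P.Path) : pLe f f := fun l => by
  obtain ⟨m, hm⟩ := Iq.exists_gt l
  exact ⟨m, f.2 hm⟩

lemma pLe_trans {f g h : P.Path} (h1 : pLe f g) (h2 : pLe g h) : pLe f h := fun l => by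
  obtain ⟨m, hm⟩ := h1 l
  obtain ⟨m', hm'⟩ := h2 m
  exact ⟨m', P.trans hm hm'⟩

lemma pLe_add {f g f' g' : P.Path} (h1 : pLe f f') (h2 : pLe g g') : pLe (f + g) (f' + g') := by
  intro l
  obtain ⟨m1, hm1⟩ := h1 l
  obtain ⟨m2, hm2⟩ := h2 l
  have hmem : 0 < max m1.1 m2.1 ∧ max m1.1 m2.1 < 1 :=
    ⟨lt_max_of_lt_left m1.2.1, max_lt m1.2.2 m2.2.2⟩
  obtain ⟨μ, hμ⟩ := Iq.exists_gt ⟨max m1.1 m2.1, hmem⟩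
  have e1 : m1.1 < μ.1 := lt_of_le_of_lt (le_max_left _ _) hμ
  have e2 : m2.1 < μ.1 := lt_of_le_of_lt (le_max_right _ _) hμ
  exact ⟨μ, P.add_prec (P.trans hm1 (f'.2 e1)) (P.trans hm2 (g'.2 e2))⟩

instance pathSetoid (P : PSgp M) : Setoid P.Path where
  r f g := pLe f g ∧ pLe g f
  iseqv := ⟨fun f => ⟨pLe_refl f, pLe_refl f⟩, fun h => ⟨h.2, h.1⟩,
    fun h1 h2 => ⟨pLe_trans h1.1 h2.1, pLe_trans h2.2 h1.2⟩⟩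

/-- The path construction `τ(S)`: equivalence classes of paths. -/
abbrev Tau (P : PSgp M) : Type _ := Quotient (pathSetoid P)

def addT : Tau P → Tau P → Tau P :=
  Quotient.map₂ (· + ·) fun _ _ hf _ _ hg => ⟨pLe_add hf.1 hg.1, pLe_add hf.2 hg.2⟩

lemma addT_mk (f g : P.Path) : addT ⟦f⟧ ⟦g⟧ = ⟦f + g⟧ := rfl

lemma path_add_assoc (f g h : P.Path) : f + g + h = f + (g + h) :=
  Subtype.ext (funext fun _ => add_assoc _ _ _)

lemma path_add_comm (f g : P.Path) : f + g = g + f :=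
  Subtype.ext (funext fun _ => add_comm _ _)

lemma path_zero_add (f : P.Path) : 0 + f = f :=
  Subtype.ext (funext fun _ => zero_add _)

lemma path_add_zero (f : P.Path) : f + 0 = f :=
  Subtype.ext (funext fun _ => add_zero _)

instance : Zero (Tau P) := ⟨⟦(0 : P.Path)⟧⟩
instance : Add (Tau P) := ⟨addT⟩

instance : AddCommMonoid (Tau P) where
  add := addT
  zero := ⟦(0 : P.Path)⟧
  add_assoc a b c := Quotient.inductionOn₃ a b c fun f g h => by
    show addT (addT ⟦f⟧ ⟦g⟧) ⟦h⟧ = addT ⟦f⟧ (addT ⟦g⟧ ⟦h⟧)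
    rw [addT_mk, addT_mk, addT_mk, addT_mk, path_add_assoc]
  zero_add a := Quotient.inductionOn a fun f => by
    show addT ⟦(0 : P.Path)⟧ ⟦f⟧ = ⟦f⟧
    rw [addT_mk, path_zero_add]
  add_zero a := Quotient.inductionOn a fun f => by
    show addT ⟦f⟧ ⟦(0 : P.Path)⟧ = ⟦f⟧
    rw [addT_mk, path_add_zero]
  add_comm a b := Quotient.inductionOn₂ a b fun f g => by
    show addT ⟦f⟧ ⟦g⟧ = addT ⟦g⟧ ⟦f⟧
    rw [addT_mk, addT_mk, path_add_comm]
  nsmul := nsmulRec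
  nsmul_zero := fun _ => rfl
  nsmul_succ := fun _ _ => rfl

def leT : Tau P → Tau P → Prop :=
  Quotient.lift₂ pLe fun _ _ _ _ hf hg => propext
    ⟨fun h => pLe_trans hf.2 (pLe_trans h hg.1), fun h => pLe_trans hf.1 (pLe_trans h hg.2)⟩

instance : PartialOrder (Tau P) where
  le := leT
  le_refl a := Quotient.inductionOn a pLe_refl
  le_trans a b c := Quotient.inductionOn₃ a b c fun _ _ _ h1 h2 => pLe_trans h1 h2
  le_antisymm a b := Quotient.inductionOn₂ a b fun _ _ h1 h2 => Quotient.sound ⟨h1, h2⟩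

lemma leT_mk (f g : P.Path) : (⟦f⟧ : Tau P) ≤ ⟦g⟧ ↔ pLe f g := Iff.rfl

end PSgp


namespace PSgp

variable {M : Type*} [AddCommMonoid M]

/-- The `ε`-cut-down of a function `f : (0,1) ∩ ℚ → M`. -/
def cutdown (P : PSgp M) (f : Iq → M) (e : Iq) : Iq → M := fun l =>
  if h : e.1 < l.1 then
    f ⟨l.1 - e.1, ⟨sub_pos.mpr h, by linarith [l.2.2, e.2.1]⟩⟩
  else 0

lemma cutdown_isPath (P : PSgp M) {f : Iq → M} (hf : P.IsPath f) (e : Iq) :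
    P.IsPath (P.cutdown f e) := by
  intro l m hlm
  unfold cutdown
  split_ifs with h1 h2 h2
  · exact hf (by show l.1 - e.1 < m.1 - e.1; linarith)
  · exact absurd (lt_trans h1 hlm) h2
  · exact P.zero_prec _
  · exact P.zero_prec _

/-- The `ε`-cut-down of a path, as a path. -/
def cutPath (P : PSgp M) (f : P.Path) (e : Iq) : P.Path :=
  ⟨P.cutdown f.1 e, P.cutdown_isPath f.2 e⟩

end PSgp

/-
The cut-down `f_ε` only takes values `≺ f(1-ε)`, so `[f_ε] ≤ [g]` as soon as `f(1-ε) ≺ g(μ)`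
for a single `μ`. The supremum of an increasing sequence `[g_k]` is dominated by a diagonal path:
`(0,1)` is cut into consecutive blocks, the `n`-th block is mapped increasingly onto a window
`(μ_n, (μ_n+1)/2)` of `g_n`, and the windows are chosen recursively so that consecutive blocks are
`≺`-related and, along an enumeration of `ℕ × ℕ`, every `g_k` is eventually dominated. Its values
are values of the `g_k`, so if `[f_{ε'}]` lies below the supremum with `ε' < ε`, then
`f(1-ε) ≺ f_{ε'}(λ) ≺ g_j(t)` for some `j, t`, whence `[f_ε] ≤ [g_j]`.
-/

namespace Iq

def approxOne (n : ℕ) : Iq :=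
  ⟨1 - 1 / (n + 2), by
    have h0 : (0 : ℚ) < 1 / (n + 2) := by positivity
    have h1 : (1 : ℚ) / (n + 2) < 1 := by
      rw [div_lt_one (by positivity)]; linarith [n.cast_nonneg (α := ℚ)]
    constructor <;> linarith⟩

lemma approxOne_strictMono : StrictMono approxOne := fun a b hab => by
  show 1 - 1 / ((a : ℚ) + 2) < 1 - 1 / ((b : ℚ) + 2)
  have : (1 : ℚ) / (b + 2) < 1 / (a + 2) :=
    one_div_lt_one_div_of_lt (by positivity) (by exact_mod_cast Nat.add_lt_add_right hab 2)
  linarith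

lemma exists_lt_approxOne (l : Iq) : ∃ n, l < approxOne n := by
  obtain ⟨n, hn⟩ := exists_nat_one_div_lt (sub_pos.2 l.2.2)
  refine ⟨n, show l.1 < 1 - 1 / ((n : ℚ) + 2) from ?_⟩
  have : (1 : ℚ) / (n + 2) < 1 / (n + 1) := one_div_lt_one_div_of_lt (by positivity) (by linarith)
  linarith

/-- The block of `(0,1)` containing `l`: blocks are delimited by the points `approxOne n`. -/
def level (l : Iq) : ℕ := Nat.find (exists_lt_approxOne l)

lemma level_mono : Monotone level := fun _ _ h => Nat.find_mono fun _ hn => lt_of_le_of_lt h hn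

lemma lt_level_approxOne (n : ℕ) : n < level (approxOne n) :=
  (Nat.lt_find_iff _ _).2 fun _ hj => not_lt.2 (approxOne_strictMono.monotone hj)

def oneSub (e : Iq) : Iq := ⟨1 - e.1, by constructor <;> linarith [e.2.1, e.2.2]⟩

def mid (μ : Iq) : Iq := ⟨(μ.1 + 1) / 2, by constructor <;> linarith [μ.2.1, μ.2.2]⟩

lemma lt_mid (μ : Iq) : μ < mid μ := show μ.1 < (μ.1 + 1) / 2 by linarith [μ.2.2]

def squeeze (μ l : Iq) : Iq :=
  ⟨μ.1 + l.1 * (1 - μ.1) / 2, by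
    have := mul_pos l.2.1 (sub_pos.2 μ.2.2)
    have := mul_lt_of_lt_one_left (sub_pos.2 μ.2.2) l.2.2
    constructor <;> linarith [μ.2.1]⟩

lemma lt_squeeze (μ l : Iq) : μ < squeeze μ l := by
  show μ.1 < μ.1 + l.1 * (1 - μ.1) / 2
  linarith [mul_pos l.2.1 (sub_pos.2 μ.2.2)]

lemma squeeze_lt_mid (μ l : Iq) : squeeze μ l < mid μ := by
  show μ.1 + l.1 * (1 - μ.1) / 2 < (μ.1 + 1) / 2
  linarith [mul_lt_of_lt_one_left (sub_pos.2 μ.2.2) l.2.2]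

lemma squeeze_strictMono (μ : Iq) : StrictMono (squeeze μ) := fun l m h => by
  show μ.1 + l.1 * (1 - μ.1) / 2 < μ.1 + m.1 * (1 - μ.1) / 2
  linarith [mul_lt_mul_of_pos_right (show l.1 < m.1 from h) (sub_pos.2 μ.2.2)]

end Iq

namespace PSgp

variable {M : Type*} [AddCommMonoid M] {P : PSgp M}

lemma pLe_of_le {g : ℕ → P.Path} (hg : ∀ n, pLe (g n) (g (n + 1))) {k n : ℕ} (h : k ≤ n) :
    pLe (g k) (g n) := by
  induction n, h using Nat.le_induction with
  | base => exact pLe_refl _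
  | succ n _ ih => exact pLe_trans ih (hg n)

section SupPath

variable (g : ℕ → P.Path) (hg : ∀ n, pLe (g n) (g (n + 1)))

/-- Where `g n` dominates the value of `g k` at `approxOne i`, for `(k, i) = Nat.unpair n`. -/
noncomputable def target (n : ℕ) : Iq :=
  (pLe_of_le hg (Nat.unpair_left_le n) (Iq.approxOne n.unpair.2)).choose

lemma prec_target (n : ℕ) :
    P.prec ((g n.unpair.1).1 (Iq.approxOne n.unpair.2)) ((g n).1 (target g hg n)) :=
  (pLe_of_le hg (Nat.unpair_left_le n) (Iq.approxOne n.unpair.2)).choose_spec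

/-- The lower end of the window of `g n` used by the diagonal path. -/
noncomputable def supBase : ℕ → Iq
  | 0 => target g hg 0
  | n + 1 => max (hg n (Iq.mid (supBase n))).choose (target g hg (n + 1))

lemma target_le_supBase (n : ℕ) : target g hg n ≤ supBase g hg n := by
  cases n with
  | zero => exact le_rfl
  | succ n => exact le_max_right _ _

lemma supBase_prec_succ {n : ℕ} {s t : Iq} (hs : s < Iq.mid (supBase g hg n))
    (ht : supBase g hg (n + 1) < t) : P.prec ((g n).1 s) ((g (n + 1)).1 t) :=
  P.trans ((g n).2 hs) <|
    P.trans (hg n _).choose_spec ((g (n + 1)).2 (lt_of_le_of_lt (le_max_left _ _) ht))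

lemma supBase_prec_of_lt {n j : ℕ} (hnj : n < j) {s t : Iq} (hs : s < Iq.mid (supBase g hg n))
    (ht : supBase g hg j < t) : P.prec ((g n).1 s) ((g j).1 t) := by
  induction j, hnj using Nat.le_induction generalizing t with
  | base => exact supBase_prec_succ g hg hs ht
  | succ j _ ih =>
    exact P.trans (ih (Iq.lt_squeeze _ t)) (supBase_prec_succ g hg (Iq.squeeze_lt_mid _ t) ht)

lemma isPath_sup :
    P.IsPath fun l => (g (Iq.level l)).1 (Iq.squeeze (supBase g hg (Iq.level l)) l) := by
  intro l m hlm
  rcases (Iq.level_mono hlm.le).eq_or_lt with h | h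
  · dsimp only
    rw [h]
    exact (g _).2 (Iq.squeeze_strictMono _ hlm)
  · exact supBase_prec_of_lt g hg h (Iq.squeeze_lt_mid _ _) (Iq.lt_squeeze _ _)

/-- The diagonal path: on the block `level l = n` it runs through `g n` on its window. -/
noncomputable def supPath : P.Path := ⟨_, isPath_sup g hg⟩

lemma pLe_supPath (k : ℕ) : pLe (g k) (supPath g hg) := by
  intro l
  obtain ⟨i, hi⟩ := Iq.exists_lt_approxOne l
  let n := Nat.pair k i
  have htarget := prec_target g hg n
  rw [Nat.unpair_pair] at htarget
  have hn := Iq.lt_level_approxOne n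
  refine ⟨Iq.approxOne n, P.trans ((g k).2 hi) (P.trans htarget ?_)⟩
  exact supBase_prec_of_lt g hg hn ((target_le_supBase g hg n).trans_lt (Iq.lt_mid _))
    (Iq.lt_squeeze _ _)

end SupPath

lemma exists_prec_of_le_of_isLUB {z : ℕ → Tau P} (hz : Monotone z) {s : Tau P}
    (hs : IsLUB (Set.range z) s) {h : P.Path} (hh : ⟦h⟧ ≤ s) (l : Iq) :
    ∃ j, ∃ g : P.Path, ⟦g⟧ = z j ∧ ∃ t, P.prec (h.1 l) (g.1 t) := by
  let g k := (z k).out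
  have hg k : pLe (g k) (g (k + 1)) := by
    simpa only [g, ← leT_mk, Quotient.out_eq] using hz (Nat.le_succ k)
  have hsup : s ≤ ⟦supPath g hg⟧ := hs.2 <| by
    rintro _ ⟨k, rfl⟩
    rw [← Quotient.out_eq (z k)]
    exact pLe_supPath g hg k
  obtain ⟨m, hm⟩ := (hh.trans hsup : pLe h (supPath g hg)) l
  exact ⟨_, g _, Quotient.out_eq _, _, hm⟩

section CutPath

variable (f : P.Path)

lemma cutPath_apply_of_lt {e l : Iq} (h : e < l) :
    (P.cutPath f e).1 l = f.1 ⟨l.1 - e.1, sub_pos.2 h, by linarith [l.2.2, e.2.1]⟩ :=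
  dif_pos h

lemma cutPath_apply_of_le {e l : Iq} (h : l ≤ e) : (P.cutPath f e).1 l = 0 :=
  dif_neg (not_lt.2 h)

lemma prec_cutPath_apply {e l x : Iq} (h : l.1 - e.1 < x.1) :
    P.prec ((P.cutPath f e).1 l) (f.1 x) := by
  rcases lt_or_ge e l with hel | hle
  · rw [cutPath_apply_of_lt f hel]
    exact f.2 h
  · rw [cutPath_apply_of_le f hle]
    exact P.zero_prec _

lemma cutPath_pLe (e : Iq) : pLe (P.cutPath f e) f :=
  fun l => ⟨l, prec_cutPath_apply f (by linarith [e.2.1])⟩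

lemma cutPath_pLe_of_prec {e m : Iq} {g : P.Path} (h : P.prec (f.1 e.oneSub) (g.1 m)) :
    pLe (P.cutPath f e) g :=
  fun l => ⟨m, P.trans (prec_cutPath_apply f (show l.1 - e.1 < 1 - e.1 by linarith [l.2.2])) h⟩

lemma exists_prec_cutPath_apply {e' e : Iq} (hlt : e' < e) :
    ∃ l, P.prec (f.1 e.oneSub) ((P.cutPath f e').1 l) := by
  have he : e.1 < 1 := e.2.2
  have he' : 0 < e'.1 := e'.2.1
  have hee : e'.1 < e.1 := hlt
  let l : Iq := ⟨(1 - e.1 + e'.1 + 1) / 2, by constructor <;> linarith⟩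
  refine ⟨l, ?_⟩
  rw [cutPath_apply_of_lt f (show e'.1 < l.1 by show e'.1 < (1 - e.1 + e'.1 + 1) / 2; linarith)]
  exact f.2 (show 1 - e.1 < (1 - e.1 + e'.1 + 1) / 2 - e'.1 by linarith)

lemma pLe_of_forall_cutPath_pLe {p : P.Path} (h : ∀ e, pLe (P.cutPath f e) p) : pLe f p := by
  intro l
  have hl : 0 < l.1 ∧ l.1 < 1 := l.2
  let e : Iq := ⟨(1 - l.1) / 2, by constructor <;> linarith⟩
  let l' : Iq := ⟨l.1 + (1 - l.1) / 2, by constructor <;> linarith⟩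
  obtain ⟨m, hm⟩ := h e l'
  refine ⟨m, ?_⟩
  have hel' : e.1 < l'.1 := show (1 - l.1) / 2 < l.1 + (1 - l.1) / 2 by linarith
  rwa [cutPath_apply_of_lt f hel',
    show (⟨l'.1 - e.1, _⟩ : Iq) = l from Subtype.ext (by simp only [l', e]; ring)] at hm

end CutPath

end PSgp

/-- The `ε`-cut-down `f_ε` of a path `f` is again a path; in `τ(S)` one has
`[f_ε] ≪ [f_{ε'}]` whenever `ε' < ε`, and `[f]` is the supremum of the `[f_ε]`. -/
theorem stmt7 {M : Type*} [AddCommMonoid M] (P : PSgp M) (f : P.Path) :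
    (∀ e : Iq, P.IsPath (P.cutdown f.1 e)) ∧
    (∀ e' e : Iq, e'.1 < e.1 →
      CuWayBelow (⟦P.cutPath f e⟧ : PSgp.Tau P) ⟦P.cutPath f e'⟧) ∧
    IsLUB (Set.range fun e : Iq => (⟦P.cutPath f e⟧ : PSgp.Tau P)) ⟦f⟧ := by
  refine ⟨fun e => P.cutdown_isPath f.2 e, ?_, ?_, ?_⟩
  · intro e' e hee z hz s hs hle
    obtain ⟨l, hl⟩ := PSgp.exists_prec_cutPath_apply f hee
    obtain ⟨j, g, hgj, t, ht⟩ := PSgp.exists_prec_of_le_of_isLUB hz hs hle l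
    exact ⟨j, hgj ▸ PSgp.cutPath_pLe_of_prec f (P.trans hl ht)⟩
  · rintro _ ⟨e, rfl⟩
    exact PSgp.cutPath_pLe f e
  · intro u hu
    induction u using Quotient.inductionOn with
    | h p => exact PSgp.pLe_of_forall_cutPath_pLe f fun e => hu ⟨e, rfl⟩
end

section
/- Let S be a P-semigroup. Then τ(S), the monoid of equivalence classes of (0,1) ∩ ℚ-indexed paths in S, equipped with the induced order and pointwise addition, is a Cu-semigroup: it satisfies axioms (O1)–(O4). -/
/-!
A class `[f]` is way below `[g]` exactly when all values of `f` lie `≺`-below one value `g μ`.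
Hence the cut-downs `λ ↦ f (r λ)` with `r ↑ 1` form a `≪`-increasing sequence with supremum
`[f]`, giving (O2), and the characterization is additive, giving (O3).

The supremum of an increasing sequence `[F n]` is obtained by gluing: `(0,1)` is cut into the
blocks `[n/(n+1), (n+1)/(n+2))`, and on the `n`-th block one follows `F n`, reparametrised into
`(m n, 1)`, where the anchors `m n` are chosen recursively so that consecutive blocks are linked
by `≺`. Every value of the glued path lies `≺`-below a value of some `F n`; this gives leastness
of the supremum, and (O4) follows by comparing cut-downs of `G + H` with `z n + w n`.
-/

lemma Iq.exists_gt_gt (a b : Iq) : ∃ c : Iq, a.1 < c.1 ∧ b.1 < c.1 := by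
  obtain ⟨c, hc⟩ := Iq.exists_gt (max a b)
  exact ⟨c, lt_of_le_of_lt (le_max_left a b) hc, lt_of_le_of_lt (le_max_right a b) hc⟩

def Iq.shift (a x : Iq) : Iq :=
  ⟨a.1 + (1 - a.1) * x.1, by
    obtain ⟨⟨ha0, ha1⟩, ⟨hx0, hx1⟩⟩ := And.intro a.2 x.2
    constructor <;> nlinarith⟩

lemma Iq.lt_shift_left (a x : Iq) : a.1 < (a.shift x).1 :=
  lt_add_of_pos_right _ (mul_pos (sub_pos.2 a.2.2) x.2.1)

lemma Iq.lt_shift_right (a x : Iq) : x.1 < (a.shift x).1 := by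
  show x.1 < a.1 + (1 - a.1) * x.1
  nlinarith [a.2.1, x.2.2]

lemma Iq.shift_lt_shift (a : Iq) {x y : Iq} (h : x.1 < y.1) : (a.shift x).1 < (a.shift y).1 := by
  have := sub_pos.2 a.2.2
  show a.1 + (1 - a.1) * x.1 < a.1 + (1 - a.1) * y.1
  gcongr

/-- The rationals `q ∈ [0, 1)` of level `n` form the block `[n / (n + 1), (n + 1) / (n + 2))`,
whose right end is `mark n`. -/
def level (q : ℚ) : ℕ := ⌊q / (1 - q)⌋₊

def mark (n : ℕ) : Iq :=
  ⟨(n + 1) / (n + 2), by positivity, (div_lt_one (by positivity)).2 (by linarith)⟩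

lemma mark_strictMono : StrictMono mark := fun n k h => by
  show ((n : ℚ) + 1) / (n + 2) < ((k : ℚ) + 1) / (k + 2)
  have : (n : ℚ) < k := by exact_mod_cast h
  rw [div_lt_div_iff₀ (by positivity) (by positivity)]
  linarith

lemma lt_mark_level {q : ℚ} (hq1 : q < 1) : q < (mark (level q)).1 := by
  have hq : q / (1 - q) < level q + 1 := Nat.lt_floor_add_one _
  rw [div_lt_iff₀ (sub_pos.2 hq1)] at hq
  show q < ((level q : ℚ) + 1) / (level q + 2)
  rw [lt_div_iff₀ (by positivity)]
  linarith

lemma level_mark (n : ℕ) : level (mark n).1 = n + 1 := by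
  have : (mark n).1 / (1 - (mark n).1) = ((n + 1 : ℕ) : ℚ) := by
    show ((n : ℚ) + 1) / (n + 2) / (1 - (n + 1) / (n + 2)) = _
    field_simp
    push_cast
    ring
  rw [level, this, Nat.floor_natCast]

lemma level_mono {q q' : ℚ} (h0 : 0 ≤ q) (hq : q ≤ q') (h1 : q' < 1) : level q ≤ level q' :=
  Nat.floor_mono (div_le_div₀ (h0.trans hq) hq (by linarith) (by linarith))

namespace PSgp

variable {M : Type*} [AddCommMonoid M] {P : PSgp M}

lemma mk_add_mk (f g : P.Path) : (⟦f⟧ : Tau P) + ⟦g⟧ = ⟦f + g⟧ := rfl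

lemma mk_le_iff {f : P.Path} {a : Tau P} : ⟦f⟧ ≤ a ↔ pLe f a.out := by
  rw [← leT_mk, Quotient.out_eq]

lemma le_iff_pLe_out {a b : Tau P} : a ≤ b ↔ pLe a.out b.out := by
  rw [← leT_mk, Quotient.out_eq, Quotient.out_eq]

lemma zero_le_tau (a : Tau P) : 0 ≤ a :=
  Quotient.inductionOn a fun _ l => ⟨l, P.zero_prec _⟩

instance : IsOrderedAddMonoid (Tau P) where
  add_le_add_left a b := Quotient.inductionOn₂ a b fun _ _ h c =>
    Quotient.inductionOn c fun _ => pLe_add h (pLe_refl _)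

def CompactlyBelow (f g : P.Path) : Prop := ∃ μ : Iq, ∀ l, P.prec (f.1 l) (g.1 μ)

lemma CompactlyBelow.add {f f' g g' : P.Path} (h : CompactlyBelow f g)
    (h' : CompactlyBelow f' g') : CompactlyBelow (f + f') (g + g') := by
  obtain ⟨⟨μ, hμ⟩, ⟨μ', hμ'⟩⟩ := And.intro h h'
  obtain ⟨ν, hμν, hμ'ν⟩ := Iq.exists_gt_gt μ μ'
  exact ⟨ν, fun l => P.add_prec (P.trans (hμ l) (g.2 hμν)) (P.trans (hμ' l) (g'.2 hμ'ν))⟩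

def Path.scale (f : P.Path) (r : Iq) : P.Path :=
  ⟨fun x => f.1 ⟨r.1 * x.1, mul_pos r.2.1 x.2.1,
      mul_lt_one_of_nonneg_of_lt_one_left r.2.1.le r.2.2 x.2.2.le⟩,
    fun _ _ h => f.2 (mul_lt_mul_of_pos_left h r.2.1)⟩

lemma scale_pLe_of_prec {f g : P.Path} {r μ : Iq} (h : P.prec (f.1 r) (g.1 μ)) :
    pLe (f.scale r) g :=
  fun x => ⟨μ, P.trans (f.2 (mul_lt_of_lt_one_right r.2.1 x.2.2)) h⟩

lemma compactlyBelow_of_pLe_scale {f g : P.Path} {r : Iq} (h : pLe f (g.scale r)) :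
    CompactlyBelow f g :=
  ⟨r, fun l => let ⟨x, hx⟩ := h l; P.trans hx (g.2 (mul_lt_of_lt_one_right r.2.1 x.2.2))⟩

lemma scale_compactlyBelow_scale (f : P.Path) {r r' : Iq} (h : r.1 < r'.1) :
    CompactlyBelow (f.scale r) (f.scale r') := by
  refine ⟨⟨r.1 / r'.1, div_pos r.2.1 r'.2.1, (div_lt_one r'.2.1).2 h⟩, fun l => f.2 ?_⟩
  show r.1 * l.1 < r'.1 * (r.1 / r'.1)
  rw [mul_div_cancel₀ _ r'.2.1.ne']
  exact mul_lt_of_lt_one_right r.2.1 l.2.2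

lemma monotone_scale_mark (f : P.Path) : Monotone fun n => (⟦f.scale (mark n)⟧ : Tau P) :=
  monotone_nat_of_le_succ fun n x =>
    ⟨x, f.2 (mul_lt_mul_of_pos_right (mark_strictMono n.lt_succ_self) x.2.1)⟩

lemma isLUB_scale_mark (f : P.Path) :
    IsLUB (Set.range fun n => (⟦f.scale (mark n)⟧ : Tau P)) ⟦f⟧ := by
  refine ⟨?_, fun u hu => ?_⟩
  · rintro _ ⟨n, rfl⟩ x
    exact ⟨x, f.2 (mul_lt_of_lt_one_left x.2.1 (mark n).2.2)⟩
  · induction u using Quotient.inductionOn with | _ U => ?_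
    intro l
    obtain ⟨x, hlx⟩ := Iq.exists_gt l
    set n := level (l.1 / x.1)
    have hl : l.1 < (mark n).1 * x.1 :=
      (div_lt_iff₀ x.2.1).1 (lt_mark_level ((div_lt_one x.2.1).2 hlx))
    obtain ⟨μ, hμ⟩ := hu ⟨n, rfl⟩ x
    exact ⟨μ, P.trans (f.2 hl) hμ⟩

section Glue

variable {F : ℕ → P.Path} {m : ℕ → Iq}

variable (F m) in
def glue (q : Iq) : M := (F (level q.1)).1 ((m (level q.1)).shift q)

variable (F m) in
def Linked : Prop := ∀ n, P.prec ((F n).1 ((m n).shift (mark n))) ((F (n + 1)).1 (m (n + 1)))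

lemma prec_shift_succ (hlink : Linked F m) {n : ℕ} {x : Iq} (hx : x.1 < (mark n).1)
    (y : Iq) :
    P.prec ((F n).1 ((m n).shift x)) ((F (n + 1)).1 ((m (n + 1)).shift y)) :=
  P.trans ((F n).2 (Iq.shift_lt_shift _ hx))
    (P.trans (hlink n) ((F (n + 1)).2 (Iq.lt_shift_left _ _)))

lemma prec_shift_of_lt (hlink : Linked F m) {n k : ℕ} (hnk : n < k) {x : Iq}
    (hx : x.1 < (mark n).1) (y : Iq) :
    P.prec ((F n).1 ((m n).shift x)) ((F k).1 ((m k).shift y)) := by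
  induction k, hnk using Nat.le_induction generalizing y with
  | base => exact prec_shift_succ hlink hx y
  | succ k hnk ih =>
    have hxk : x.1 < (mark k).1 := hx.trans (mark_strictMono (Nat.lt_of_succ_le hnk))
    exact P.trans (ih x) (prec_shift_succ hlink hxk y)

lemma glue_isPath (hlink : Linked F m) : P.IsPath (glue F m) := by
  intro l l' h
  rcases (level_mono l.2.1.le h.le l'.2.2).eq_or_lt with heq | hlt
  · unfold glue
    rw [heq]
    exact (F _).2 (Iq.shift_lt_shift _ h)
  · exact prec_shift_of_lt hlink hlt (lt_mark_level l.2.2) l'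

end Glue

lemma exists_forall_prec_of_pLe {F : ℕ → P.Path} {g : P.Path} {n : ℕ}
    (h : ∀ j ≤ n, pLe (F j) g) (x : Iq) :
    ∃ μ : Iq, ∀ j ≤ n, P.prec ((F j).1 x) (g.1 μ) := by
  induction n with
  | zero =>
    obtain ⟨μ, hμ⟩ := h 0 le_rfl x
    exact ⟨μ, fun j hj => Nat.le_zero.1 hj ▸ hμ⟩
  | succ n ih =>
    obtain ⟨μ, hμ⟩ := ih fun j hj => h j (hj.trans n.le_succ)
    obtain ⟨μ', hμ'⟩ := h (n + 1) le_rfl x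
    obtain ⟨ν, hμν, hμ'ν⟩ := Iq.exists_gt_gt μ μ'
    refine ⟨ν, fun j hj => ?_⟩
    rcases Nat.le_succ_iff.1 hj with hj | rfl
    · exact P.trans (hμ j hj) (g.2 hμν)
    · exact P.trans hμ' (g.2 hμ'ν)

/-- Asking this for every `j ≤ n`, not only for `j = n`, is what makes the glued path
dominate each `F j`. -/
lemma exists_anchors {F : ℕ → P.Path} (hF : ∀ ⦃j n⦄, j ≤ n → pLe (F j) (F n)) :
    ∃ m : ℕ → Iq, ∀ n, ∀ j ≤ n,
      P.prec ((F j).1 ((m n).shift (mark n))) ((F (n + 1)).1 (m (n + 1))) := by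
  have step (n : ℕ) (x : Iq) : ∃ μ : Iq, ∀ j ≤ n, P.prec ((F j).1 x) ((F (n + 1)).1 μ) :=
    exists_forall_prec_of_pLe (fun j hj => hF (hj.trans n.le_succ)) x
  choose next hnext using step
  exact ⟨fun n => Nat.rec (mark 0) (fun n a => next n (a.shift (mark n))) n,
    fun n => hnext n _⟩

theorem exists_path_sup {F : ℕ → P.Path} (hF : ∀ ⦃j n⦄, j ≤ n → pLe (F j) (F n)) :
    ∃ G : P.Path, (∀ j, pLe (F j) G) ∧ ∀ l, ∃ n μ, P.prec (G.1 l) ((F n).1 μ) := by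
  obtain ⟨m, hm⟩ := exists_anchors hF
  refine ⟨⟨glue F m, glue_isPath fun n => hm n n le_rfl⟩, fun j l => ?_, fun l => ?_⟩
  · set n := max j (level l.1)
    have hl : l.1 < (mark n).1 :=
      (lt_mark_level l.2.2).trans_le (mark_strictMono.monotone (le_max_right _ _))
    have hglue : glue F m (mark n) = (F (n + 1)).1 ((m (n + 1)).shift (mark n)) := by
      rw [glue, level_mark]
    refine ⟨mark n, ?_⟩
    show P.prec _ (glue F m (mark n))
    rw [hglue]
    exact P.trans ((F j).2 (hl.trans (Iq.lt_shift_right _ _)))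
      (P.trans (hm n j (le_max_left _ _)) ((F (n + 1)).2 (Iq.lt_shift_left _ _)))
  · obtain ⟨μ, hμ⟩ := Iq.exists_gt ((m (level l.1)).shift l)
    exact ⟨level l.1, μ, (F _).2 hμ⟩

theorem exists_isLUB (z : ℕ → Tau P) (hz : Monotone z) :
    ∃ G : P.Path, IsLUB (Set.range z) ⟦G⟧ ∧
      ∀ l, ∃ n μ, P.prec (G.1 l) ((z n).out.1 μ) := by
  obtain ⟨G, hzG, hGz⟩ :=
    exists_path_sup (F := fun n => (z n).out) fun j n h => le_iff_pLe_out.1 (hz h)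
  refine ⟨G, ⟨?_, fun u hu => ?_⟩, hGz⟩
  · rintro _ ⟨n, rfl⟩
    rw [← (z n).out_eq]
    exact hzG n
  · rw [mk_le_iff]
    intro l
    obtain ⟨n, μ, h⟩ := hGz l
    obtain ⟨μ', h'⟩ := le_iff_pLe_out.1 (hu ⟨n, rfl⟩) μ
    exact ⟨μ', P.trans h h'⟩

theorem mk_wayBelow_mk_iff {f g : P.Path} :
    CuWayBelow (⟦f⟧ : Tau P) ⟦g⟧ ↔ CompactlyBelow f g := by
  constructor
  · intro h
    obtain ⟨k, hk⟩ := h _ (monotone_scale_mark g) _ (isLUB_scale_mark g) le_rfl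
    exact compactlyBelow_of_pLe_scale hk
  · rintro ⟨μ₀, hμ₀⟩ z hz s hs hgs
    obtain ⟨G, hG, hGz⟩ := exists_isLUB z hz
    obtain rfl := hs.unique hG
    obtain ⟨μ, hμ⟩ := hgs μ₀
    obtain ⟨n, μ', hμ'⟩ := hGz μ
    exact ⟨n, mk_le_iff.2 fun l => ⟨μ', P.trans (hμ₀ l) (P.trans hμ hμ')⟩⟩

theorem wayBelow_add {a' a b' b : Tau P} (ha : CuWayBelow a' a) (hb : CuWayBelow b' b) :
    CuWayBelow (a' + b') (a + b) := by
  induction a', a using Quotient.inductionOn₂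
  induction b', b using Quotient.inductionOn₂
  rw [mk_wayBelow_mk_iff] at ha hb
  rw [mk_add_mk, mk_add_mk, mk_wayBelow_mk_iff]
  exact ha.add hb

theorem isLUB_add (z w : ℕ → Tau P) (hz : Monotone z) (hw : Monotone w) (s t : Tau P)
    (hs : IsLUB (Set.range z) s) (ht : IsLUB (Set.range w) t) :
    IsLUB (Set.range fun n => z n + w n) (s + t) := by
  obtain ⟨G, hG, hGz⟩ := exists_isLUB z hz
  obtain ⟨H, hH, hHw⟩ := exists_isLUB w hw
  obtain rfl := hs.unique hG
  obtain rfl := ht.unique hH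
  refine ⟨?_, fun u hu => ?_⟩
  · rintro _ ⟨n, rfl⟩
    exact add_le_add (hG.1 ⟨n, rfl⟩) (hH.1 ⟨n, rfl⟩)
  · rw [mk_add_mk]
    refine (isLUB_scale_mark (G + H)).2 ?_
    rintro _ ⟨k, rfl⟩
    obtain ⟨n₁, μ₁, h₁⟩ := hGz (mark k)
    obtain ⟨n₂, μ₂, h₂⟩ := hHw (mark k)
    calc (⟦(G + H).scale (mark k)⟧ : Tau P)
        = ⟦G.scale (mark k)⟧ + ⟦H.scale (mark k)⟧ := rfl
      _ ≤ z (max n₁ n₂) + w (max n₁ n₂) :=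
        add_le_add ((mk_le_iff.2 (scale_pLe_of_prec h₁)).trans (hz (le_max_left _ _)))
          ((mk_le_iff.2 (scale_pLe_of_prec h₂)).trans (hw (le_max_right _ _)))
      _ ≤ u := hu ⟨_, rfl⟩

end PSgp

theorem stmt8 {M : Type*} [AddCommMonoid M] (P : PSgp M) : IsCuSgp (PSgp.Tau P) := by
  refine ⟨PSgp.zero_le_tau, fun _ _ _ _ => add_le_add, fun z hz => ?_, fun a => ?_,
    fun _ _ _ _ => PSgp.wayBelow_add, PSgp.isLUB_add⟩
  · obtain ⟨G, hG, -⟩ := PSgp.exists_isLUB z hz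
    exact ⟨⟦G⟧, hG⟩
  · induction a using Quotient.inductionOn with | _ f => ?_
    exact ⟨fun n => ⟦f.scale (mark n)⟧,
      fun n => PSgp.mk_wayBelow_mk_iff.2
        (PSgp.scale_compactlyBelow_scale f (mark_strictMono n.lt_succ_self)),
      PSgp.isLUB_scale_mark f⟩
end

section
/- Let S be a Q-semigroup with auxiliary relation ≺. For a path f : (0,1) ∩ ℚ → S, define its endpoint f(1) := sup_λ f(λ). Then: (1) (f+g)(1) = f(1) + g(1); (2) if f ≾ g then f(1) ≤ g(1); (3) if [f] ≪ [g] in τ(S) then f(1) ≺ g(1); (4) if ([f_n]) is increasing in τ(S) with supremum [f], then f(1) = sup_n f_n(1). -/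
/-- A `Q`-semigroup: a positively ordered monoid satisfying (O1) and (O4), together
with an additive auxiliary relation. -/
structure QSgp (S : Type*) [AddCommMonoid S] [PartialOrder S] where
  prec : S → S → Prop
  prec_le : ∀ ⦃a b : S⦄, prec a b → a ≤ b
  prec_mono : ∀ ⦃a' a b b' : S⦄, a' ≤ a → prec a b → b ≤ b' → prec a' b'
  zero_prec : ∀ a : S, prec 0 a
  add_prec : ∀ ⦃a b c d : S⦄, prec a b → prec c d → prec (a + c) (b + d)
  zero_le : ∀ a : S, 0 ≤ a
  add_mono : ∀ ⦃a b c d : S⦄, a ≤ b → c ≤ d → a + c ≤ b + d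
  O1 : ∀ z : ℕ → S, Monotone z → ∃ s, IsLUB (Set.range z) s
  O4 : ∀ z w : ℕ → S, Monotone z → Monotone w → ∀ s t : S, IsLUB (Set.range z) s →
    IsLUB (Set.range w) t → IsLUB (Set.range fun n => z n + w n) (s + t)

/-- Every `Q`-semigroup is in particular a `P`-semigroup. -/
def QSgp.toPSgp {S : Type*} [AddCommMonoid S] [PartialOrder S] (Q : QSgp S) : PSgp S where
  prec := Q.prec
  trans := fun _ _ _ h1 h2 => Q.prec_mono (Q.prec_le h1) h2 le_rfl
  zero_prec := Q.zero_prec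
  add_prec := Q.add_prec

/-!
Everything runs along the sequence `seq n = (n+1)/(n+2)`, which is cofinal in `(0,1) ∩ ℚ`.
Along it the endpoint of a path is the supremum of an increasing sequence, so (O4) makes
endpoints additive. A path `g` is the supremum in `τ(S)` of its rescalings `t ↦ g (seq n * t)`,
which stop short of `1`; compact containment of `[f]` in `[g]` therefore puts `[f]` below one of
them, giving (3). For (4) a diagonal path `H` is built whose values are values of the `F n` and
which lies above every `F n`: on the block `seq (k-1) ≤ t < seq k` it runs through `F k` on an
interval `(s k, 1)`, where `s k` is chosen so that `F k (s k)` dominates every `F n`, `n ≤ k`, at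
a point beyond both `seq (k-1)` and the parameters used on the previous block. Then
`[f] ≤ [H]`, which bounds `f(1)` by `sup_n f_n(1)`.
-/

open Set Filter

namespace Iq

instance : Mul Iq :=
  ⟨fun a b => ⟨a.1 * b.1, mul_pos a.2.1 b.2.1,
    mul_lt_one_of_nonneg_of_lt_one_left a.2.1.le a.2.2 b.2.2.le⟩⟩

lemma mul_lt_left (a b : Iq) : a * b < a :=
  mul_lt_of_lt_one_right a.2.1 b.2.2

lemma mul_lt_right (a b : Iq) : a * b < b :=
  mul_lt_of_lt_one_left b.2.1 a.2.2

lemma strictMono_mul_left (a : Iq) : StrictMono (a * ·) :=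
  fun _ _ h => show a.1 * _ < a.1 * _ from mul_lt_mul_of_pos_left h a.2.1

def seq (n : ℕ) : Iq :=
  ⟨(n + 1) / (n + 2), by positivity, by rw [div_lt_one (by positivity)]; linarith⟩

lemma seq_monotone : Monotone seq := by
  refine monotone_nat_of_le_succ fun n => ?_
  show ((n : ℚ) + 1) / (n + 2) ≤ ((n + 1 : ℕ) + 1 : ℚ) / ((n + 1 : ℕ) + 2)
  rw [div_le_div_iff₀ (by positivity) (by positivity)]
  push_cast
  linarith

lemma exists_lt_seq (t : Iq) : ∃ n, t < seq n := by
  have h1 : 0 < 1 - t.1 := sub_pos.2 t.2.2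
  obtain ⟨n, hn⟩ := exists_nat_gt (1 / (1 - t.1))
  refine ⟨n, show t.1 < (n + 1) / (n + 2) from ?_⟩
  rw [div_lt_iff₀ h1] at hn
  rw [lt_div_iff₀ (by positivity)]
  nlinarith

lemma tendsto_seq_atTop : Tendsto seq atTop atTop :=
  tendsto_atTop_atTop_of_monotone seq_monotone fun t =>
    (exists_lt_seq t).imp fun _ => le_of_lt

lemma exists_lt_seq_mul {l m : Iq} (h : l < m) : ∃ n, l < seq n * m := by
  obtain ⟨n, hn⟩ := exists_lt_seq ⟨l.1 / m.1, div_pos l.2.1 m.2.1, (div_lt_one m.2.1).2 h⟩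
  refine ⟨n, show l.1 < (seq n).1 * m.1 from ?_⟩
  rwa [← div_lt_iff₀ m.2.1]

noncomputable def seqIndex (t : Iq) : ℕ := Nat.find (exists_lt_seq t)

lemma lt_seq_seqIndex (t : Iq) : t < seq (seqIndex t) := Nat.find_spec (exists_lt_seq t)

lemma seqIndex_mono : Monotone seqIndex := fun _ _ h =>
  Nat.find_mono fun _ hn => h.trans_lt hn

lemma lt_seqIndex_of_seq_le {t : Iq} {k : ℕ} (h : seq k ≤ t) : k < seqIndex t := by
  by_contra! hk
  exact (h.trans_lt (lt_seq_seqIndex t)).not_ge (seq_monotone hk)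

/-- `AffineMap.lineMap s 1 t`, an increasing bijection of `(0,1)` onto `(s,1)`. -/
def lineMapOne (s t : Iq) : Iq :=
  ⟨s.1 + (1 - s.1) * t.1, by nlinarith [s.2.1, s.2.2, t.2.1], by nlinarith [s.2.2, t.2.2]⟩

lemma lt_lineMapOne_left (s t : Iq) : s < lineMapOne s t :=
  show s.1 < s.1 + (1 - s.1) * t.1 by nlinarith [s.2.2, t.2.1]

lemma lt_lineMapOne_right (s t : Iq) : t < lineMapOne s t :=
  show t.1 < s.1 + (1 - s.1) * t.1 by nlinarith [s.2.1, t.2.2]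

lemma strictMono_lineMapOne (s : Iq) : StrictMono (lineMapOne s) := fun t t' h =>
  show s.1 + (1 - s.1) * t.1 < s.1 + (1 - s.1) * t'.1 from
    add_lt_add_right (mul_lt_mul_of_pos_left (show t.1 < t'.1 from h) (sub_pos.2 s.2.2)) _

end Iq

namespace PSgp

variable {M : Type*} [AddCommMonoid M] {P : PSgp M}

instance (P : PSgp M) : IsTrans M P.prec := ⟨P.trans⟩

def Path.comp (p : P.Path) (φ : Iq → Iq) (hφ : StrictMono φ) : P.Path :=
  ⟨fun t => p.1 (φ t), fun _ _ h => p.2 (hφ h)⟩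

def Path.rescale (p : P.Path) (a : Iq) : P.Path := p.comp (a * ·) (Iq.strictMono_mul_left a)

lemma monotone_mk_rescale_seq (g : P.Path) :
    Monotone fun n => (⟦g.rescale (Iq.seq n)⟧ : Tau P) := by
  intro a b hab l
  obtain ⟨l', hl'⟩ := Iq.exists_gt l
  exact ⟨l', g.2 (mul_lt_mul' (Iq.seq_monotone hab) hl' l.2.1.le (Iq.seq b).2.1)⟩

lemma isLUB_mk_rescale_seq (g : P.Path) :
    IsLUB (range fun n => (⟦g.rescale (Iq.seq n)⟧ : Tau P)) ⟦g⟧ := by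
  refine ⟨?_, fun b hb => ?_⟩
  · rintro _ ⟨n, rfl⟩ l
    exact ⟨l, g.2 (Iq.mul_lt_right _ l)⟩
  · induction b using Quotient.inductionOn with
    | h p =>
      intro l
      obtain ⟨l', hl'⟩ := Iq.exists_gt l
      obtain ⟨n, hn⟩ := Iq.exists_lt_seq_mul hl'
      obtain ⟨μ, hμ⟩ := hb ⟨n, rfl⟩ l'
      exact ⟨μ, P.trans (g.2 hn) hμ⟩

section Diagonal

variable {F : ℕ → P.Path}

lemma exists_forall_le_prec (hF : Monotone fun n => (⟦F n⟧ : Tau P)) (k : ℕ) (x : Iq) :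
    ∃ q, ∀ n ≤ k, P.prec ((F n).1 x) ((F k).1 q) := by
  choose q hq using fun n : Fin (k + 1) => hF (Nat.le_of_lt_succ n.2) x
  have : Nonempty Iq := ⟨x⟩
  obtain ⟨M, hM⟩ := Finite.exists_le q
  obtain ⟨q', hq'⟩ := Iq.exists_gt M
  exact ⟨q', fun n hn =>
    P.trans (hq ⟨n, Nat.lt_succ_of_le hn⟩) ((F k).2 ((hM _).trans_lt hq'))⟩

variable (hF : Monotone fun n => (⟦F n⟧ : Tau P))

noncomputable def diagStart : ℕ → Iq
  | 0 => Iq.seq 0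
  | k + 1 => (exists_forall_le_prec hF (k + 1) ((diagStart k).lineMapOne (Iq.seq k))).choose

noncomputable def diagEnd (k : ℕ) : Iq := (diagStart hF k).lineMapOne (Iq.seq k)

lemma prec_diagEnd (k : ℕ) :
    ∀ n ≤ k + 1, P.prec ((F n).1 (diagEnd hF k)) ((F (k + 1)).1 (diagStart hF (k + 1))) :=
  (exists_forall_le_prec hF (k + 1) _).choose_spec

lemma prec_diagStart {k j : ℕ} (h : k < j) :
    P.prec ((F k).1 (diagStart hF k)) ((F j).1 (diagStart hF j)) :=
  Nat.rel_of_forall_rel_succ_of_lt P.prec (f := fun k => (F k).1 (diagStart hF k))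
    (fun k => P.trans ((F k).2 (Iq.lt_lineMapOne_left _ _)) (prec_diagEnd hF k k k.le_succ)) h

noncomputable def diagFun (t : Iq) : M :=
  (F (Iq.seqIndex t)).1 ((diagStart hF (Iq.seqIndex t)).lineMapOne t)

lemma prec_diagFun {k : ℕ} {m : Iq} (h : k ≤ Iq.seqIndex m) :
    P.prec ((F k).1 (diagStart hF k)) (diagFun hF m) := by
  obtain rfl | h := h.eq_or_lt
  · exact (F _).2 (Iq.lt_lineMapOne_left _ _)
  · exact P.trans (prec_diagStart hF h) ((F _).2 (Iq.lt_lineMapOne_left _ _))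

lemma isPath_diagFun : P.IsPath (diagFun hF) := by
  intro l m hlm
  obtain h | h := (Iq.seqIndex_mono hlm.le).eq_or_lt
  · unfold diagFun
    rw [h]
    exact (F _).2 (Iq.strictMono_lineMapOne _ hlm)
  · have hl := (F (Iq.seqIndex l)).2
      (Iq.strictMono_lineMapOne (diagStart hF (Iq.seqIndex l)) (Iq.lt_seq_seqIndex l))
    exact P.trans (P.trans hl (prec_diagEnd hF _ _ (Nat.le_succ _))) (prec_diagFun hF h)

noncomputable def diagPath : P.Path := ⟨diagFun hF, isPath_diagFun hF⟩

lemma pLe_diagPath (n : ℕ) : pLe (F n) (diagPath hF) := by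
  intro l
  obtain ⟨j, hj⟩ := Iq.exists_lt_seq l
  have hl : l < diagEnd hF (max n j) :=
    (hj.trans_le (Iq.seq_monotone (le_max_right n j))).trans (Iq.lt_lineMapOne_right _ _)
  have hcatch := prec_diagEnd hF (max n j) n ((le_max_left n j).trans (Nat.le_succ _))
  have hH : P.prec _ (diagFun hF (Iq.seq (max n j + 1))) :=
    prec_diagFun hF (Iq.lt_seqIndex_of_seq_le le_rfl).le
  exact ⟨Iq.seq (max n j + 1), P.trans (P.trans ((F n).2 hl) hcatch) hH⟩

end Diagonal

theorem exists_path_forall_pLe {F : ℕ → P.Path} (hF : Monotone fun n => (⟦F n⟧ : Tau P)) :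
    ∃ H : P.Path, (∀ n, pLe (F n) H) ∧ ∀ m, ∃ n x, H.1 m = (F n).1 x :=
  ⟨diagPath hF, pLe_diagPath hF, fun _ => ⟨_, _, rfl⟩⟩

end PSgp

namespace QSgp

open PSgp

variable {S : Type*} [AddCommMonoid S] [PartialOrder S] {Q : QSgp S}

lemma monotone_path (p : Q.toPSgp.Path) : Monotone p.1 := fun _ _ h =>
  h.eq_or_lt.elim (fun h => h ▸ le_rfl) fun h => Q.prec_le (p.2 h)

lemma isLUB_range_comp_seq_iff (p : Q.toPSgp.Path) {x : S} :
    IsLUB (range (p.1 ∘ Iq.seq)) x ↔ IsLUB (range p.1) x :=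
  isLUB_congr ((monotone_path p).upperBounds_range_comp_tendsto_atTop Iq.tendsto_seq_atTop)

lemma upperBounds_range_subset_of_pLe {p q : Q.toPSgp.Path} (h : pLe p q) :
    upperBounds (range q.1) ⊆ upperBounds (range p.1) := by
  rintro b hb _ ⟨l, rfl⟩
  obtain ⟨m, hm⟩ := h l
  exact (Q.prec_le hm).trans (hb ⟨m, rfl⟩)

theorem isLUB_range_add {f g : Q.toPSgp.Path} {ef eg : S} (hf : IsLUB (range f.1) ef)
    (hg : IsLUB (range g.1) eg) : IsLUB (range (f + g).1) (ef + eg) := by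
  rw [← isLUB_range_comp_seq_iff] at hf hg ⊢
  exact Q.O4 _ _ ((monotone_path f).comp Iq.seq_monotone)
    ((monotone_path g).comp Iq.seq_monotone) ef eg hf hg

theorem prec_of_cuWayBelow {f g : Q.toPSgp.Path} {ef eg : S} (hf : IsLUB (range f.1) ef)
    (hg : IsLUB (range g.1) eg) (h : CuWayBelow (⟦f⟧ : Tau Q.toPSgp) ⟦g⟧) :
    Q.prec ef eg := by
  obtain ⟨k, hk⟩ := h _ (monotone_mk_rescale_seq g) _ (isLUB_mk_rescale_seq g) le_rfl
  have hfk : ef ≤ g.1 (Iq.seq k) := hf.2 <| upperBounds_range_subset_of_pLe hk <| by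
    rintro _ ⟨l, rfl⟩
    exact monotone_path g (Iq.mul_lt_left (Iq.seq k) l).le
  obtain ⟨μ, hμ⟩ := Iq.exists_gt (Iq.seq k)
  exact Q.prec_mono hfk (g.2 hμ) (hg.1 ⟨μ, rfl⟩)

theorem isLUB_range_of_isLUB_mk {F : ℕ → Q.toPSgp.Path} {eF : ℕ → S} {f : Q.toPSgp.Path}
    {ef : S} (hF : Monotone fun n => (⟦F n⟧ : Tau Q.toPSgp))
    (hFf : IsLUB (range fun n => (⟦F n⟧ : Tau Q.toPSgp)) ⟦f⟧)
    (heF : ∀ n, IsLUB (range (F n).1) (eF n)) (hf : IsLUB (range f.1) ef) :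
    IsLUB (range eF) ef := by
  obtain ⟨H, hFH, hH⟩ := exists_path_forall_pLe hF
  refine ⟨?_, fun b hb => ?_⟩
  · rintro _ ⟨n, rfl⟩
    exact (heF n).2 (upperBounds_range_subset_of_pLe (hFf.1 ⟨n, rfl⟩) hf.1)
  · have hfH : pLe f H :=
      hFf.2 (show (⟦H⟧ : Tau Q.toPSgp) ∈ _ by rintro _ ⟨n, rfl⟩; exact hFH n)
    refine hf.2 (upperBounds_range_subset_of_pLe hfH ?_)
    rintro _ ⟨m, rfl⟩
    obtain ⟨n, x, hx⟩ := hH m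
    exact hx ▸ ((heF n).1 ⟨x, rfl⟩).trans (hb ⟨n, rfl⟩)

end QSgp

/-- Properties of endpoints of paths in a `Q`-semigroup: endpoints are additive,
monotone with respect to `≾`, way-below in `τ(S)` yields `≺` of endpoints, and the
endpoint of the supremum of an increasing sequence in `τ(S)` is the supremum of the
endpoints. -/
theorem stmt12 {S : Type*} [AddCommMonoid S] [PartialOrder S] (Q : QSgp S)
    (f g : Q.toPSgp.Path) (ef eg : S)
    (hf : IsLUB (Set.range f.1) ef) (hg : IsLUB (Set.range g.1) eg) :
    IsLUB (Set.range (f + g).1) (ef + eg) ∧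
    (PSgp.pLe f g → ef ≤ eg) ∧
    (CuWayBelow (⟦f⟧ : PSgp.Tau Q.toPSgp) ⟦g⟧ → Q.prec ef eg) ∧
    (∀ (F : ℕ → Q.toPSgp.Path) (eF : ℕ → S),
      Monotone (fun n => (⟦F n⟧ : PSgp.Tau Q.toPSgp)) →
      IsLUB (Set.range fun n => (⟦F n⟧ : PSgp.Tau Q.toPSgp)) ⟦f⟧ →
      (∀ n, IsLUB (Set.range (F n).1) (eF n)) →
      IsLUB (Set.range eF) ef) :=
  ⟨QSgp.isLUB_range_add hf hg,
    fun h => hf.2 (QSgp.upperBounds_range_subset_of_pLe h hg.1),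
    QSgp.prec_of_cuWayBelow hf hg,
    fun _ _ hF hFf heF => QSgp.isLUB_range_of_isLUB_mk hF hFf heF hf⟩
end
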